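/- arXiv:1610.07994 — 3 statements merged into one kernel-verified Lean document; each statement's English description precedes it below -/
import Mathlib

section
/- Suppose a Markov chain (X_k) on a metric space, a continuous function f, and constants η, η', r > 0 satisfy: as long as X_k remains in a set A, with probability at least η we have f(X_{k+1}) ≤ f(X_k) - η'. If f(X_0) ≤ m and f ≥ m + Nη' on the complement of a target set B reachable only through A, then with probability at least η^N the chain, started in the starting region, reaches B before leaving A ∪ B, where N = ⌈(sup_A f - inf f)/η'⌉. -/
/-!
On the event that `B` has not been hit by time `k`, the chain is in `A \ B`, so conditionally on
the past it decreases `f` by `η'` at step `k` with probability at least `η`. Hence the event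
"at every step `k < N`, either `B` has already been hit or `f` decreases by `η'`" has probability
at least `η ^ N`. On this event `B` is hit within `N` steps: otherwise `f` would decrease by
`N * η'` from its starting value `≤ m`, pushing it below the values `f` takes off `B`. Until `B`
is hit the chain stays in `A`.
-/

open MeasureTheory

section ConditionalBounds

variable {Ω : Type*} {m m0 : MeasurableSpace Ω} {μ : Measure Ω} [IsFiniteMeasure μ] {η : ℝ}

theorem ofReal_mul_measure_le_measure_inter_of_le_condExp (hm : m ≤ m0) (hη : 0 ≤ η)
    {C D : Set Ω} (hC : MeasurableSet[m] C) (hD : MeasurableSet D)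
    (h : ∀ᵐ ω ∂μ, ω ∈ C → η ≤ (μ[D.indicator (fun _ => (1 : ℝ))|m]) ω) :
    ENNReal.ofReal η * μ C ≤ μ (C ∩ D) := by
  have hreal : η * μ.real C ≤ μ.real (C ∩ D) :=
    calc η * μ.real C = ∫ _ in C, η ∂μ := by rw [setIntegral_const, smul_eq_mul, mul_comm]
      _ ≤ ∫ ω in C, (μ[D.indicator (fun _ => (1 : ℝ))|m]) ω ∂μ :=
        setIntegral_mono_on_ae (integrableOn_const (measure_ne_top μ C))
          integrable_condExp.integrableOn (hm C hC) h
      _ = μ.real (C ∩ D) := by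
        rw [setIntegral_condExp hm ((integrable_const 1).indicator hD) hC,
          setIntegral_indicator hD, setIntegral_const, smul_eq_mul, mul_one]
  rw [← ofReal_measureReal, ← ofReal_measureReal, ← ENNReal.ofReal_mul hη]
  exact ENNReal.ofReal_le_ofReal hreal

theorem ofReal_mul_measure_le_measure_inter_union (hm : m ≤ m0) (hη : 0 ≤ η) (hη1 : η ≤ 1)
    {S D : Set Ω} (hS : MeasurableSet[m] S) (hD : MeasurableSet D)
    (h : ∀ᵐ ω ∂μ, ω ∉ S → η ≤ (μ[D.indicator (fun _ => (1 : ℝ))|m]) ω)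
    {C : Set Ω} (hC : MeasurableSet[m] C) :
    ENNReal.ofReal η * μ C ≤ μ (C ∩ (S ∪ D)) := by
  have hS0 : MeasurableSet S := hm S hS
  have hdiff : ENNReal.ofReal η * μ (C \ S) ≤ μ ((C \ S) ∩ D) :=
    ofReal_mul_measure_le_measure_inter_of_le_condExp hm hη (hC.diff hS) hD
      (h.mono fun ω hω hωC => hω hωC.2)
  calc ENNReal.ofReal η * μ C
      = ENNReal.ofReal η * μ (C ∩ S) + ENNReal.ofReal η * μ (C \ S) := by
        rw [← mul_add, measure_inter_add_sdiff C hS0]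
    _ ≤ μ (C ∩ S) + μ ((C \ S) ∩ D) :=
        add_le_add (mul_le_of_le_one_left' (ENNReal.ofReal_le_one.mpr hη1)) hdiff
    _ = μ ((C ∩ S) ∪ ((C \ S) ∩ D)) :=
        (measure_union (Set.disjoint_left.mpr fun _ h1 h2 => h2.1.2 h1.2)
          (((hm C hC).diff hS0).inter hD)).symm
    _ ≤ μ (C ∩ (S ∪ D)) := measure_mono <| by
        rintro ω (⟨hωC, hωS⟩ | ⟨⟨hωC, -⟩, hωD⟩)
        exacts [⟨hωC, Or.inl hωS⟩, ⟨hωC, Or.inr hωD⟩]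

end ConditionalBounds

theorem ofReal_pow_le_measure_biInter {Ω : Type*} {m0 : MeasurableSpace Ω} {μ : Measure Ω}
    [IsProbabilityMeasure μ] {ℱ : Filtration ℕ m0} {η : ℝ} (hη : 0 ≤ η) {T : ℕ → Set Ω}
    (hT : ∀ k, MeasurableSet[ℱ (k + 1)] (T k))
    (hstep : ∀ n C, MeasurableSet[ℱ n] C → ENNReal.ofReal η * μ C ≤ μ (C ∩ T n)) (n : ℕ) :
    ENNReal.ofReal (η ^ n) ≤ μ (⋂ k < n, T k) := by
  induction n with
  | zero => simp
  | succ n ih =>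
    have hmeas : MeasurableSet[ℱ n] (⋂ k < n, T k) :=
      MeasurableSet.iInter fun k => MeasurableSet.iInter fun hk => ℱ.mono hk _ (hT k)
    calc ENNReal.ofReal (η ^ (n + 1)) = ENNReal.ofReal η * ENNReal.ofReal (η ^ n) := by
          rw [pow_succ', ENNReal.ofReal_mul hη]
      _ ≤ ENNReal.ofReal η * μ (⋂ k < n, T k) := by gcongr
      _ ≤ μ (⋂ k < n + 1, T k) := by rw [Set.biInter_lt_succ]; exact hstep n _ hmeas

section Paths

variable {E : Type*} {x : ℕ → E} {A B : Set E}

theorem exists_le_mem_of_forall_lt_or_descent {f : E → ℝ} {η' m : ℝ} {N : ℕ}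
    (hdesc : ∀ k < N, (∃ j ≤ k, x j ∈ B) ∨ f (x (k + 1)) ≤ f (x k) - η')
    (h0 : f (x 0) ≤ m) (hBc : ∀ y, y ∉ B → m - N * η' < f y) :
    ∃ j ≤ N, x j ∈ B := by
  by_contra! hnB
  have hdec : ∀ k ≤ N, f (x k) ≤ f (x 0) - k * η' := by
    intro k hk
    induction k with
    | zero => simp
    | succ k ih =>
      have hstep : f (x (k + 1)) ≤ f (x k) - η' :=
        (hdesc k hk).resolve_left fun ⟨j, hj, hjB⟩ => hnB j (by omega) hjB
      push_cast
      linarith [ih (by omega)]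
  linarith [hdec N le_rfl, hBc _ (hnB N le_rfl)]

theorem exists_mem_forall_lt_mem_of_exists_mem (hstay : ∀ k, (∀ j ≤ k, x j ∉ B) → x k ∈ A)
    (hB : ∃ k, x k ∈ B) : ∃ k, x k ∈ B ∧ ∀ j < k, x j ∈ A := by
  classical
  exact ⟨Nat.find hB, Nat.find_spec hB, fun j hj =>
    hstay j fun i hi => Nat.find_min hB (lt_of_le_of_lt hi hj)⟩

end Paths

theorem measurableSet_exists_le_mem {Ω E : Type*} {m0 : MeasurableSpace Ω} [MeasurableSpace E]
    {ℱ : Filtration ℕ m0} {X : ℕ → Ω → E} (hadp : ∀ k, Measurable[ℱ k] (X k)) {B : Set E}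
    (hB : MeasurableSet B) (k : ℕ) : MeasurableSet[ℱ k] {ω | ∃ j ≤ k, X j ω ∈ B} := by
  have hunion : {ω | ∃ j ≤ k, X j ω ∈ B} = ⋃ j ≤ k, X j ⁻¹' B := by ext; simp
  rw [hunion]
  exact MeasurableSet.iUnion fun j => MeasurableSet.iUnion fun hj =>
    (hadp j).mono (ℱ.mono hj) le_rfl hB

theorem stmt4_general {Ω E : Type*} {m0 : MeasurableSpace Ω} (μ : Measure Ω) [IsProbabilityMeasure μ]
    [MeasurableSpace E]
    (ℱ : Filtration ℕ m0) (X : ℕ → Ω → E)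
    (hadp : ∀ k, Measurable[ℱ k] (X k))
    (f : E → ℝ) (hf : Measurable f) (A B : Set E) (hB : MeasurableSet B)
    (η η' m : ℝ) (N : ℕ) (hη : 0 < η) (hη1 : η ≤ 1)
    (hcond : ∀ k, ∀ᵐ ω ∂μ, X k ω ∈ A \ B →
      η ≤ (μ[Set.indicator {ω' | f (X (k + 1) ω') ≤ f (X k ω') - η'} (fun _ => (1 : ℝ))|ℱ k]) ω)
    (h0 : ∀ ω, f (X 0 ω) ≤ m)
    (hBc : ∀ x, x ∉ B → m - N * η' < f x)
    (hstay : ∀ ω, ∀ k : ℕ, (∀ j ≤ k, X j ω ∉ B) → X k ω ∈ A) :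
    ENNReal.ofReal (η ^ N) ≤ μ {ω | ∃ k : ℕ, X k ω ∈ B ∧ ∀ j < k, X j ω ∈ A} := by
  set Hit : ℕ → Set Ω := fun k => {ω | ∃ j ≤ k, X j ω ∈ B}
  set Dec : ℕ → Set Ω := fun k => {ω | f (X (k + 1) ω) ≤ f (X k ω) - η'}
  have hDec : ∀ k, MeasurableSet[ℱ (k + 1)] (Dec k) := fun k =>
    measurableSet_le (hf.comp (hadp (k + 1)))
      ((hf.comp ((hadp k).mono (ℱ.mono k.le_succ) le_rfl)).sub_const η')
  have hstep : ∀ n C, MeasurableSet[ℱ n] C →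
      ENNReal.ofReal η * μ C ≤ μ (C ∩ (Hit n ∪ Dec n)) := fun n _ hC =>
    ofReal_mul_measure_le_measure_inter_union (ℱ.le n) hη.le hη1
      (measurableSet_exists_le_mem hadp hB n) (ℱ.le _ _ (hDec n))
      ((hcond n).mono fun ω hω hωHit => hω
        ⟨hstay ω n fun j hj hjB => hωHit ⟨j, hj, hjB⟩, fun hnB => hωHit ⟨n, le_rfl, hnB⟩⟩) hC
  calc ENNReal.ofReal (η ^ N) ≤ μ (⋂ k < N, (Hit k ∪ Dec k)) :=
        ofReal_pow_le_measure_biInter hη.le (fun k =>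
          (ℱ.mono k.le_succ _ (measurableSet_exists_le_mem hadp hB k)).union (hDec k)) hstep N
    _ ≤ _ := measure_mono fun ω hω => by
        simp only [Set.mem_iInter] at hω
        obtain ⟨j, -, hjB⟩ := exists_le_mem_of_forall_lt_or_descent hω (h0 ω) hBc
        exact exists_mem_forall_lt_mem_of_exists_mem (hstay ω) ⟨j, hjB⟩

theorem stmt4 {Ω E : Type*} {m0 : MeasurableSpace Ω} (μ : Measure Ω) [IsProbabilityMeasure μ]
    [MeasurableSpace E] [MetricSpace E]
    (ℱ : Filtration ℕ m0) (X : ℕ → Ω → E)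
    (hadp : ∀ k, Measurable[ℱ k] (X k))
    (f : E → ℝ) (hf : Measurable f) (A B : Set E) (hA : MeasurableSet A) (hB : MeasurableSet B)
    (η η' m : ℝ) (N : ℕ) (hη : 0 < η) (hη1 : η ≤ 1) (hη' : 0 < η')
    (hN : N = ⌈(sSup (f '' A) - sInf (Set.range f)) / η'⌉₊)
    (hcond : ∀ k, ∀ᵐ ω ∂μ, X k ω ∈ A \ B →
      η ≤ (μ[Set.indicator {ω' | f (X (k + 1) ω') ≤ f (X k ω') - η'} (fun _ => (1 : ℝ))|ℱ k]) ω)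
    (h0 : ∀ ω, f (X 0 ω) ≤ m)
    (hBc : ∀ x, x ∉ B → m - N * η' < f x)
    (hstay : ∀ ω, ∀ k : ℕ, (∀ j ≤ k, X j ω ∉ B) → X k ω ∈ A) :
    ENNReal.ofReal (η ^ N) ≤ μ {ω | ∃ k : ℕ, X k ω ∈ B ∧ ∀ j < k, X j ω ∈ A} :=
  stmt4_general μ ℱ X hadp f hf A B hB η η' m N hη hη1 hcond h0 hBc hstay
end

section
/- Let f : ℝ² → ℝ be C² on a compact set K with ‖∇f‖ ≥ c > 0 and second derivatives bounded by M on K. Then there exist r, η' > 0 such that for every z ∈ K there is an angle θ with the property: for all φ ∈ [θ, θ + π - η], f(z + r e^{iφ}) ≤ f(z) - η', where η > 0 is any fixed constant less than π. -/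
open Real Metric

/-!
Let `g = Df(z)` and write `g u = ⟪w, u⟫` with `‖w‖ = ‖g‖ ≥ c`. Every direction `e^{iφ}` whose
angle with `-w` is at most `π/2 - η/2` satisfies `g (e^{iφ}) ≤ -c sin (η/2)`, and these directions
form an arc of length `π - η`. Since the Hessian is bounded on a fixed neighbourhood of `K`, the
second-order Taylor remainder along a step of length `r` is `O(r²)`, so for `r` small enough the
first-order decrease `r c sin (η/2)` wins, uniformly in `z ∈ K`.
-/

lemma Real.cos_le_neg_sin_half {η φ : ℝ} (hη : 0 ≤ η)
    (hφ : φ ∈ Set.Icc (π / 2 + η / 2) (3 * π / 2 - η / 2)) :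
    cos φ ≤ -sin (η / 2) := by
  have hdist : |φ - π| ≤ π / 2 - η / 2 := abs_le.mpr ⟨by linarith [hφ.1], by linarith [hφ.2]⟩
  have hcos : cos (π / 2 - η / 2) ≤ cos |φ - π| :=
    cos_le_cos_of_nonneg_of_le_pi (abs_nonneg _) (by linarith [pi_pos]) hdist
  rw [cos_abs, cos_sub_pi, cos_pi_div_two_sub] at hcos
  linarith

lemma exists_angle_forall_apply_exp_le (g : ℂ →L[ℝ] ℝ) {η : ℝ} (hη : 0 ≤ η) :
    ∃ θ : ℝ, ∀ φ ∈ Set.Icc θ (θ + π - η),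
      g (Complex.exp (φ * Complex.I)) ≤ -(‖g‖ * sin (η / 2)) := by
  set w : ℂ := (InnerProductSpace.toDual ℝ ℂ).symm g
  have hw : ‖w‖ = ‖g‖ := LinearIsometryEquiv.norm_map _ _
  have hg : ∀ φ : ℝ, g (Complex.exp (φ * Complex.I)) = ‖g‖ * cos (φ - w.arg) := fun φ => by
    have hinner : g (Complex.exp (φ * Complex.I)) = inner ℝ w (Complex.exp (φ * Complex.I)) :=
      InnerProductSpace.toDual_symm_apply.symm
    rw [hinner, Complex.inner, ← hw, cos_sub]
    simp only [Complex.mul_re, Complex.conj_re, Complex.conj_im, Complex.exp_ofReal_mul_I_re,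
      Complex.exp_ofReal_mul_I_im]
    linear_combination -(cos φ * Complex.norm_mul_cos_arg w + sin φ * Complex.norm_mul_sin_arg w)
  refine ⟨w.arg + π / 2 + η / 2, fun φ hφ => ?_⟩
  rw [hg, ← mul_neg]
  refine mul_le_mul_of_nonneg_left (Real.cos_le_neg_sin_half hη ⟨?_, ?_⟩) (norm_nonneg g)
  · linarith [hφ.1]
  · linarith [hφ.2]

section Taylor

variable {E F : Type*} [NormedAddCommGroup E] [NormedSpace ℝ E] [NormedAddCommGroup F]
  [NormedSpace ℝ F] {f : E → F} {s : Set E} {B : ℝ}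

lemma Convex.norm_fderiv_sub_le_of_norm_iteratedFDeriv_two_le (hs : Convex ℝ s)
    (hf : ∀ x ∈ s, ContDiffAt ℝ 2 f x) (hB : ∀ x ∈ s, ‖iteratedFDeriv ℝ 2 f x‖ ≤ B)
    {x y : E} (hx : x ∈ s) (hy : y ∈ s) :
    ‖fderiv ℝ f y - fderiv ℝ f x‖ ≤ B * ‖y - x‖ := by
  refine hs.norm_image_sub_le_of_norm_fderiv_le (𝕜 := ℝ) (fun u hu => ?_) (fun u hu => ?_) hx hy
  · exact ((hf u hu).fderiv_right (m := 1) le_rfl).differentiableAt one_ne_zero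
  · rw [← norm_iteratedFDeriv_zero (𝕜 := ℝ), norm_iteratedFDeriv_fderiv, norm_iteratedFDeriv_fderiv]
    exact hB u hu

lemma norm_sub_sub_fderiv_le_of_norm_iteratedFDeriv_two_le {z v : E} {r : ℝ}
    (hf : ∀ x ∈ closedBall z r, ContDiffAt ℝ 2 f x)
    (hB : ∀ x ∈ closedBall z r, ‖iteratedFDeriv ℝ 2 f x‖ ≤ B) (hv : ‖v‖ ≤ r) :
    ‖f (z + v) - f z - fderiv ℝ f z v‖ ≤ B * r * ‖v‖ := by
  have hz : z ∈ closedBall z r := mem_closedBall_self ((norm_nonneg v).trans hv)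
  have hzv : z + v ∈ closedBall z r := by simpa [mem_closedBall, dist_eq_norm] using hv
  have hderiv : ∀ x ∈ closedBall z r, ‖fderiv ℝ f x - fderiv ℝ f z‖ ≤ B * r := fun x hx => by
    have hB0 : 0 ≤ B := (norm_nonneg _).trans (hB z hz)
    calc ‖fderiv ℝ f x - fderiv ℝ f z‖ ≤ B * ‖x - z‖ :=
          (convex_closedBall z r).norm_fderiv_sub_le_of_norm_iteratedFDeriv_two_le hf hB hz hx
      _ ≤ B * r := mul_le_mul_of_nonneg_left (by rwa [← dist_eq_norm]) hB0
  simpa using (convex_closedBall z r).norm_image_sub_le_of_norm_hasFDerivWithin_le'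
    (fun x hx => ((hf x hx).differentiableAt two_ne_zero).hasFDerivAt.hasFDerivWithinAt)
    hderiv hz hzv

end Taylor

lemma IsCompact.exists_cthickening_bound_norm_iteratedFDeriv {E F : Type*}
    [NormedAddCommGroup E] [NormedSpace ℝ E] [ProperSpace E] [NormedAddCommGroup F]
    [NormedSpace ℝ F] {K U : Set E} {f : E → F} {n : ℕ} (hK : IsCompact K) (hU : IsOpen U)
    (hKU : K ⊆ U) (hf : ContDiffOn ℝ n f U) :
    ∃ δ > 0, cthickening δ K ⊆ U ∧
      ∃ B > 0, ∀ x ∈ cthickening δ K, ‖iteratedFDeriv ℝ n f x‖ ≤ B := by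
  obtain ⟨δ, hδ, hδU⟩ := hK.exists_cthickening_subset_open hU hKU
  have hcont : ContinuousOn (iteratedFDeriv ℝ n f) U :=
    (hf.continuousOn_iteratedFDerivWithin le_rfl hU.uniqueDiffOn).congr
      (iteratedFDerivWithin_of_isOpen n hU).symm
  obtain ⟨C, hC⟩ := hK.cthickening.exists_bound_of_continuousOn (hcont.mono hδU)
  exact ⟨δ, hδ, hδU, max C 1, by positivity, fun x hx => (hC x hx).trans (le_max_left _ _)⟩

theorem stmt6_general (K U : Set ℂ) (hK : IsCompact K) (hU : IsOpen U) (hKU : K ⊆ U)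
    (f : ℂ → ℝ) (hf : ContDiffOn ℝ 2 f U)
    (c η : ℝ) (hc : 0 < c) (hη : 0 < η) (hηπ : η < Real.pi)
    (hgrad : ∀ z ∈ K, c ≤ ‖fderiv ℝ f z‖) :
    ∃ r > (0 : ℝ), ∃ η' > (0 : ℝ), ∀ z ∈ K, ∃ θ : ℝ,
      ∀ φ ∈ Set.Icc θ (θ + Real.pi - η),
        f (z + r * Complex.exp (φ * Complex.I)) ≤ f z - η' := by
  obtain ⟨δ, hδ, hδU, B, hB, hbound⟩ :=
    hK.exists_cthickening_bound_norm_iteratedFDeriv hU hKU hf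
  set s := sin (η / 2)
  have hs : 0 < s := sin_pos_of_pos_of_lt_pi (by linarith) (by linarith)
  set r := min δ (c * s / (2 * B))
  have hr : 0 < r := lt_min hδ (by positivity)
  have hBr : B * r ≤ c * s / 2 := by
    calc B * r ≤ B * (c * s / (2 * B)) := mul_le_mul_of_nonneg_left (min_le_right _ _) hB.le
      _ = c * s / 2 := by field_simp
  refine ⟨r, hr, r * c * s / 2, by positivity, fun z hz => ?_⟩
  have hball : closedBall z r ⊆ cthickening δ K :=
    (closedBall_subset_closedBall (min_le_left _ _)).trans (closedBall_subset_cthickening hz δ)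
  obtain ⟨θ, hθ⟩ := exists_angle_forall_apply_exp_le (fderiv ℝ f z) hη.le
  refine ⟨θ, fun φ hφ => ?_⟩
  set u := Complex.exp (φ * Complex.I)
  have hv : ‖(r : ℂ) * u‖ = r := by simp [u, abs_of_pos hr]
  have htaylor := abs_le.mp <| norm_sub_sub_fderiv_le_of_norm_iteratedFDeriv_two_le
    (fun x hx => hf.contDiffAt (hU.mem_nhds (hδU (hball hx)))) (fun x hx => hbound x (hball hx))
    hv.le
  have hlin : fderiv ℝ f z ((r : ℂ) * u) = r * fderiv ℝ f z u := by
    rw [← Complex.real_smul, map_smul, smul_eq_mul]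
  have hdecr : fderiv ℝ f z u ≤ -(c * s) :=
    (hθ φ hφ).trans (neg_le_neg (mul_le_mul_of_nonneg_right (hgrad z hz) hs.le))
  rw [hv, hlin] at htaylor
  calc f (z + r * u) ≤ f z + r * fderiv ℝ f z u + B * r * r := by linarith [htaylor.2]
    _ ≤ f z + r * -(c * s) + c * s / 2 * r := by gcongr
    _ = f z - r * c * s / 2 := by ring

theorem stmt6 (K U : Set ℂ) (hK : IsCompact K) (hU : IsOpen U) (hKU : K ⊆ U)
    (f : ℂ → ℝ) (hf : ContDiffOn ℝ 2 f U)
    (c M η : ℝ) (hc : 0 < c) (hM : 0 < M) (hη : 0 < η) (hηπ : η < Real.pi)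
    (hgrad : ∀ z ∈ K, c ≤ ‖fderiv ℝ f z‖)
    (hhess : ∀ z ∈ K, ‖iteratedFDeriv ℝ 2 f z‖ ≤ M) :
    ∃ r > (0 : ℝ), ∃ η' > (0 : ℝ), ∀ z ∈ K, ∃ θ : ℝ,
      ∀ φ ∈ Set.Icc θ (θ + Real.pi - η),
        f (z + r * Complex.exp (φ * Complex.I)) ≤ f z - η' :=
  stmt6_general K U hK hU hKU f hf c η hc hη hηπ hgrad
end

section
/- Let α, β, γ be nonzero complex numbers with α + β + γ = 0. Define φ(w→b) = Re(λ^{-1}(β/γ)^{-m}(β/α)^{-n}) · αλ(β/γ)^{m'}(β/α)^{n'} for appropriate coordinate pairs. Then the circulation of the associated dual flow around every triangular face of the dual lattice is zero; equivalently, for each face of the hexagonal lattice, the alternating sum of φ over its three incident edge-pairs vanishes, so the dual flow admits a primitive ψ. -/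
/-!
With `u = β / γ` and `v = β / α`, the relation `α + β + γ = 0` reads `1 + u⁻¹ + v⁻¹ = 0`.
The flow factors as `φ(w, b) = Re (X w) * Y b` with `X (m, n) = λ⁻¹ u⁻ᵐ v⁻ⁿ` and
`Y (m, n) = α λ uᵐ vⁿ`; the three neighbours of a white vertex carry `Y`-values
`Y (m, n) * {1, v⁻¹, u⁻¹}` and those of a black vertex carry `X`-values `X (m, n) * {1, v⁻¹, u⁻¹}`,
so both vertex sums vanish. Together they say that the dual flow is a closed form on `ℤ²`,
hence exact.
-/

/-- The T-graph flow: `phiT α β γ lam m n m' n'` is the flow on the oriented edge from the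
white vertex with coordinates `(m, n)` to the black vertex with coordinates `(m', n')`. -/
noncomputable def phiT (α β γ lam : ℂ) (m n m' n' : ℤ) : ℂ :=
  (((lam⁻¹ * (β / γ) ^ (-m) * (β / α) ^ (-n)).re : ℝ) : ℂ) *
    (α * lam * (β / γ) ^ m' * (β / α) ^ n')

namespace Int

variable {G : Type*} [AddCommGroup G]

open Finset in
theorem exists_primitive (f : ℤ → G) : ∃ F : ℤ → G, F 0 = 0 ∧ ∀ n, F (n + 1) - F n = f n := by
  refine ⟨fun n => ∑ i ∈ Ico 0 n, f i - ∑ i ∈ Ico n 0, f i, by simp, fun n => ?_⟩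
  dsimp only
  rcases le_or_gt 0 n with hn | hn
  · rw [← sum_Ico_add_eq_sum_Ico_add_one hn, Ico_eq_empty_of_le hn,
      Ico_eq_empty_of_le (show (0 : ℤ) ≤ n + 1 by omega)]
    abel
  · rw [← insert_Ico_add_one_left_eq_Ico hn, sum_insert (by simp), Ico_eq_empty_of_le hn.le,
      Ico_eq_empty_of_le (show n + 1 ≤ 0 by omega)]
    abel

theorem exists_primitive₂ (f g : ℤ → ℤ → G)
    (hclosed : ∀ m n, f m (n + 1) - f m n = g (m + 1) n - g m n) :
    ∃ ψ : ℤ × ℤ → G, ∀ m n,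
      ψ (m + 1, n) - ψ (m, n) = f m n ∧ ψ (m, n + 1) - ψ (m, n) = g m n := by
  obtain ⟨F, -, hF⟩ := exists_primitive fun m => f m 0
  choose P hP0 hP using fun m => exists_primitive (g m)
  refine ⟨fun p => F p.1 + P p.1 p.2, fun m n => ⟨?_, by simp [hP]⟩⟩
  set H : ℤ → G := fun n => F (m + 1) + P (m + 1) n - (F m + P m n) - f m n
  have hH0 : H 0 = 0 := by
    simp only [H, hP0, ← hF m]
    abel
  have hper : Function.Periodic H 1 := fun n => by
    simp only [H]
    linear_combination (norm := abel) hP (m + 1) n - hP m n - hclosed m n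
  have hHn : H n = 0 := by simpa [hH0] using hper.zsmul_eq n
  simpa [H, sub_eq_zero] using hHn

end Int

section VertexSums

variable {K : Type*} [Field K]

theorem one_add_inv_div_add_inv_div_eq_zero {α β γ : K} (hβ : β ≠ 0) (hsum : α + β + γ = 0) :
    1 + (β / γ)⁻¹ + (β / α)⁻¹ = 0 := by
  rw [inv_div, inv_div]
  field_simp
  linear_combination hsum

theorem mul_zpow_mul_zpow_add_sub_one_eq_zero {u v : K} (hu : u ≠ 0) (hv : v ≠ 0)
    (h : 1 + u⁻¹ + v⁻¹ = 0) (c : K) (m n : ℤ) :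
    c * u ^ m * v ^ n + c * u ^ m * v ^ (n - 1) + c * u ^ (m - 1) * v ^ n = 0 := by
  rw [zpow_sub_one₀ hv, zpow_sub_one₀ hu]
  linear_combination c * u ^ m * v ^ n * h

end VertexSums

section TGraphFlow

variable {α β γ : ℂ}

theorem phiT_white_sum (hα : α ≠ 0) (hβ : β ≠ 0) (hγ : γ ≠ 0) (hsum : α + β + γ = 0)
    (lam : ℂ) (m n : ℤ) :
    phiT α β γ lam m n m n + phiT α β γ lam m n m (n - 1) + phiT α β γ lam m n (m - 1) n = 0 := by
  have := mul_zpow_mul_zpow_add_sub_one_eq_zero (div_ne_zero hβ hγ) (div_ne_zero hβ hα)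
    (one_add_inv_div_add_inv_div_eq_zero hβ hsum) (α * lam) m n
  unfold phiT
  linear_combination (((lam⁻¹ * (β / γ) ^ (-m) * (β / α) ^ (-n)).re : ℝ) : ℂ) * this

theorem phiT_black_sum (hα : α ≠ 0) (hβ : β ≠ 0) (hγ : γ ≠ 0) (hsum : α + β + γ = 0)
    (lam : ℂ) (m n : ℤ) :
    phiT α β γ lam m n m n + phiT α β γ lam m (n + 1) m n + phiT α β γ lam (m + 1) n m n = 0 := by
  have hX := congrArg Complex.re <| mul_zpow_mul_zpow_add_sub_one_eq_zero (div_ne_zero hβ hγ)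
    (div_ne_zero hβ hα) (one_add_inv_div_add_inv_div_eq_zero hβ hsum) lam⁻¹ (-m) (-n)
  simp only [Complex.add_re, Complex.zero_re, ← neg_add'] at hX
  unfold phiT
  linear_combination (norm := (push_cast; ring))
    (α * lam * (β / γ) ^ m * (β / α) ^ n) * congrArg Complex.ofReal hX

end TGraphFlow

theorem stmt10_general (α β γ lam : ℂ) (hα : α ≠ 0) (hβ : β ≠ 0) (hγ : γ ≠ 0)
    (hsum : α + β + γ = 0) :
    (∀ m n : ℤ,
      phiT α β γ lam m n m n + phiT α β γ lam m n m (n - 1)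
        + phiT α β γ lam m n (m - 1) n = 0) ∧
    (∀ m n : ℤ,
      phiT α β γ lam m n m n + phiT α β γ lam m (n + 1) m n
        + phiT α β γ lam (m + 1) n m n = 0) ∧
    ∃ ψ : ℤ × ℤ → ℂ, ∀ m n : ℤ,
      ψ (m + 1, n) - ψ (m, n) = phiT α β γ lam m n m (n - 1) ∧
      ψ (m, n + 1) - ψ (m + 1, n) = phiT α β γ lam m n m n ∧
      ψ (m, n) - ψ (m, n + 1) = phiT α β γ lam m n (m - 1) n := by
  have white := phiT_white_sum hα hβ hγ hsum lam
  have black := phiT_black_sum hα hβ hγ hsum lam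
  obtain ⟨ψ, hψ⟩ := Int.exists_primitive₂ (fun m n => phiT α β γ lam m n m (n - 1))
    (fun m n => -phiT α β γ lam m n (m - 1) n) fun m n => by
      simp only [add_sub_cancel_right]
      linear_combination black m n - white m n
  refine ⟨white, black, ψ, fun m n => ⟨(hψ m n).1, ?_, ?_⟩⟩
  · linear_combination (hψ m n).2 - (hψ m n).1 - white m n
  · linear_combination -(hψ m n).2

/-- The circulation of the dual flow around every triangular face of the dual lattice
vanishes (equivalently, the alternating sum of `φ` over the three edges at each white and
each black vertex vanishes), hence the dual flow admits a primitive `ψ` (the T-graph map). -/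
theorem stmt10 (α β γ lam : ℂ) (hα : α ≠ 0) (hβ : β ≠ 0) (hγ : γ ≠ 0)
    (hlam : ‖lam‖ = 1) (hsum : α + β + γ = 0) :
    (∀ m n : ℤ,
      phiT α β γ lam m n m n + phiT α β γ lam m n m (n - 1)
        + phiT α β γ lam m n (m - 1) n = 0) ∧
    (∀ m n : ℤ,
      phiT α β γ lam m n m n + phiT α β γ lam m (n + 1) m n
        + phiT α β γ lam (m + 1) n m n = 0) ∧
    ∃ ψ : ℤ × ℤ → ℂ, ∀ m n : ℤ,
      ψ (m + 1, n) - ψ (m, n) = phiT α β γ lam m n m (n - 1) ∧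
      ψ (m, n + 1) - ψ (m + 1, n) = phiT α β γ lam m n m n ∧
      ψ (m, n) - ψ (m, n + 1) = phiT α β γ lam m n (m - 1) n :=
  stmt10_general α β γ lam hα hβ hγ hsum
end
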